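/- Let X be a non-linear carpet and assume there exist a point (x,y) ∈ X and (i,j) ∈ Λ with |f_i'(x)| ≠ |g_j'(y)|. Then for every ε > 0 there are infinitely many n ∈ ℕ for which there exists p ∈ 𝒫(Λⁿ) with λ₁(p, a_n) ≠ λ₂(p, b_n) and g(p, a_n, b_n) ≥ t_n − ε, where t_n = max_{q ∈ 𝒫(Λⁿ)} g(q, a_n, b_n) and Λⁿ is identified with a subset of Λ₁ⁿ × Λ₂ⁿ. -/
import Mathlib


open Set Filter MeasureTheory Metric
open scoped Topology
open scoped ENNReal NNReal

noncomputable section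

/-- Composition of the maps of an IFS along a finite word (in order). -/
def compWord {Λ : Type*} (f : Λ → ℝ → ℝ) : List Λ → ℝ → ℝ
  | [] => id
  | i :: w => f i ∘ compWord f w

/-- The chain-rule derivative of `compWord f w`, expressed via the derivatives `f'`. -/
def wordDeriv {Λ : Type*} (f f' : Λ → ℝ → ℝ) : List Λ → ℝ → ℝ
  | [] => fun _ => 1
  | i :: w => fun x => f' i (compWord f w x) * wordDeriv f f' w x

/-- `‖f_w'‖`: the sup over `[0,1]` of `|f_w'|`. -/
def wordDerivNorm {Λ : Type*} (f f' : Λ → ℝ → ℝ) (w : List Λ) : ℝ :=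
  sSup ((fun x => |wordDeriv f f' w x|) '' Icc (0:ℝ) 1)

/-- A self-conformal IFS on `[0,1]`: finitely many uniformly contracting differentiable maps
with Hölder continuous non-vanishing derivatives. -/
structure ConformalIFS (Λ : Type*) where
  f : Λ → ℝ → ℝ
  f' : Λ → ℝ → ℝ
  mapsTo : ∀ i, MapsTo (f i) (Icc (0:ℝ) 1) (Icc (0:ℝ) 1)
  hasDeriv : ∀ i, ∀ x ∈ Icc (0:ℝ) 1, HasDerivWithinAt (f i) (f' i x) (Icc (0:ℝ) 1) x
  exponent : ℝ
  exponent_pos : 0 < exponent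
  holder : ∀ i, ∃ C : ℝ, ∀ x ∈ Icc (0:ℝ) 1, ∀ y ∈ Icc (0:ℝ) 1,
    |f' i x - f' i y| ≤ C * |x - y| ^ exponent
  nonvanishing : ∀ i, ∀ x ∈ Icc (0:ℝ) 1, f' i x ≠ 0
  ratio : ℝ
  ratio_pos : 0 < ratio
  ratio_lt_one : ratio < 1
  contracting : ∀ i, ∀ x ∈ Icc (0:ℝ) 1, ∀ y ∈ Icc (0:ℝ) 1, |f i x - f i y| ≤ ratio * |x - y|

/-- The open set condition (with an open subset of `[0,1]`) for a conformal IFS. -/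
def CoordOSC {Λ : Type*} (F : ConformalIFS Λ) : Prop :=
  ∃ U : Set ℝ, U.Nonempty ∧ U ⊆ Icc 0 1 ∧ (∃ O : Set ℝ, IsOpen O ∧ U = O ∩ Icc 0 1) ∧
    (∀ i, F.f i '' U ⊆ U) ∧ Pairwise fun i i' => Disjoint (F.f i '' U) (F.f i' '' U)

end
noncomputable section

/-- The planar map `S_{(i,j)}(x,y) = (f_i(x), g_j(y))`. -/
def carpetMap {Λ₁ Λ₂ : Type*} (F : ConformalIFS Λ₁) (G : ConformalIFS Λ₂)
    (ij : Λ₁ × Λ₂) (p : ℝ × ℝ) : ℝ × ℝ :=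
  (F.f ij.1 p.1, G.f ij.2 p.2)

/-- `X` is the attractor (a non-linear carpet) of the IFS `(S_{(i,j)})_{(i,j) ∈ A}`. -/
def IsCarpetAttractor {Λ₁ Λ₂ : Type*} (F : ConformalIFS Λ₁) (G : ConformalIFS Λ₂)
    (A : Set (Λ₁ × Λ₂)) (X : Set (ℝ × ℝ)) : Prop :=
  X.Nonempty ∧ IsCompact X ∧ X ⊆ Icc (0:ℝ) 1 ×ˢ Icc (0:ℝ) 1 ∧
    X = ⋃ ij ∈ A, carpetMap F G ij '' X

/-- `p` is a probability vector indexed by `A` (entries outside `A` vanish). -/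
def IsProbVec {Γ₁ Γ₂ : Type*} [Fintype Γ₁] [Fintype Γ₂] (A : Set (Γ₁ × Γ₂))
    (p : Γ₁ × Γ₂ → ℝ) : Prop :=
  (∀ ij, 0 ≤ p ij) ∧ (∀ ij ∉ A, p ij = 0) ∧ ∑ ij : Γ₁ × Γ₂, p ij = 1

/-- Column sums `q_i(p)`. -/
def colSum {Γ₁ Γ₂ : Type*} [Fintype Γ₂] (p : Γ₁ × Γ₂ → ℝ) (i : Γ₁) : ℝ := ∑ j : Γ₂, p (i, j)

/-- Row sums `r_j(p)`. -/
def rowSum {Γ₁ Γ₂ : Type*} [Fintype Γ₁] (p : Γ₁ × Γ₂ → ℝ) (j : Γ₂) : ℝ := ∑ i : Γ₁, p (i, j)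

/-- The first Lyapunov exponent `λ₁(p,a)`. -/
def lyap1 {Γ₁ Γ₂ : Type*} [Fintype Γ₁] [Fintype Γ₂] (p : Γ₁ × Γ₂ → ℝ) (a : Γ₁ → ℝ) : ℝ :=
  ∑ ij : Γ₁ × Γ₂, p ij * Real.log (a ij.1)

/-- The second Lyapunov exponent `λ₂(p,b)`. -/
def lyap2 {Γ₁ Γ₂ : Type*} [Fintype Γ₁] [Fintype Γ₂] (p : Γ₁ × Γ₂ → ℝ) (b : Γ₂ → ℝ) : ℝ :=
  ∑ ij : Γ₁ × Γ₂, p ij * Real.log (b ij.2)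

/-- `g₁(p,a,b)`. -/
def gOne {Γ₁ Γ₂ : Type*} [Fintype Γ₁] [Fintype Γ₂] (p : Γ₁ × Γ₂ → ℝ) (a : Γ₁ → ℝ)
    (b : Γ₂ → ℝ) : ℝ :=
  (∑ ij : Γ₁ × Γ₂, p ij * Real.log (colSum p ij.1)) / lyap1 p a +
    ((∑ ij : Γ₁ × Γ₂, p ij * Real.log (p ij)) -
      ∑ ij : Γ₁ × Γ₂, p ij * Real.log (colSum p ij.1)) / lyap2 p b

/-- `g₂(p,a,b)`. -/
def gTwo {Γ₁ Γ₂ : Type*} [Fintype Γ₁] [Fintype Γ₂] (p : Γ₁ × Γ₂ → ℝ) (a : Γ₁ → ℝ)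
    (b : Γ₂ → ℝ) : ℝ :=
  (∑ ij : Γ₁ × Γ₂, p ij * Real.log (rowSum p ij.2)) / lyap2 p b +
    ((∑ ij : Γ₁ × Γ₂, p ij * Real.log (p ij)) -
      ∑ ij : Γ₁ × Γ₂, p ij * Real.log (rowSum p ij.2)) / lyap1 p a

/-- `g(p,a,b)`: equal to `g₁` when `λ₁(p,a) ≥ λ₂(p,b)` and to `g₂` otherwise. -/
noncomputable def gFun {Γ₁ Γ₂ : Type*} [Fintype Γ₁] [Fintype Γ₂] (p : Γ₁ × Γ₂ → ℝ)
    (a : Γ₁ → ℝ) (b : Γ₂ → ℝ) : ℝ :=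
  if lyap2 p b ≤ lyap1 p a then gOne p a b else gTwo p a b

/-- The alphabet `Λⁿ`, viewed as a subset of `Λ₁ⁿ × Λ₂ⁿ`. -/
def blockAlphabet {Λ₁ Λ₂ : Type*} (A : Set (Λ₁ × Λ₂)) (n : ℕ) :
    Set ((Fin n → Λ₁) × (Fin n → Λ₂)) :=
  {w | ∀ k, (w.1 k, w.2 k) ∈ A}

namespace ConformalIFS

variable {Λ : Type*} (F : ConformalIFS Λ)

lemma compWord_mem (w : List Λ) {z : ℝ} (hz : z ∈ Icc (0:ℝ) 1) :
    compWord F.f w z ∈ Icc (0:ℝ) 1 := by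
  induction w with
  | nil => exact hz
  | cons i w ih => exact F.mapsTo i ih

lemma compWord_lip (w : List Λ) {z z' : ℝ} (hz : z ∈ Icc (0:ℝ) 1) (hz' : z' ∈ Icc (0:ℝ) 1) :
    |compWord F.f w z - compWord F.f w z'| ≤ F.ratio ^ w.length * |z - z'| := by
  induction w with
  | nil => simp [compWord]
  | cons i w ih =>
    calc |F.f i (compWord F.f w z) - F.f i (compWord F.f w z')|
        ≤ F.ratio * |compWord F.f w z - compWord F.f w z'| :=
          F.contracting i _ (F.compWord_mem w hz) _ (F.compWord_mem w hz')
      _ ≤ F.ratio * (F.ratio ^ w.length * |z - z'|) := by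
          exact mul_le_mul_of_nonneg_left ih F.ratio_pos.le
      _ = F.ratio ^ (i :: w).length * |z - z'| := by
          simp [List.length_cons, pow_succ]; ring

lemma deriv_abs_le (i : Λ) {x : ℝ} (hx : x ∈ Icc (0:ℝ) 1) : |F.f' i x| ≤ F.ratio := by
  have hd := F.hasDeriv i x hx
  rw [hasDerivWithinAt_iff_tendsto_slope] at hd
  have habs : Tendsto (fun y => |slope (F.f i) x y|) (𝓝[Icc (0:ℝ) 1 \ {x}] x) (𝓝 |F.f' i x|) :=
    hd.abs
  have hbound : ∀ y ∈ Icc (0:ℝ) 1 \ {x}, |slope (F.f i) x y| ≤ F.ratio := by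
    intro y hy
    have hyx : y ≠ x := hy.2
    rw [slope_def_field]
    rw [abs_div]
    rw [div_le_iff₀ (abs_pos.2 (sub_ne_zero.2 hyx))]
    have := F.contracting i y hy.1 x hx
    simpa [abs_sub_comm] using this
  -- need NeBot of the filter
  rcases lt_or_eq_of_le hx.2 with h1 | h1
  · have hne : (𝓝[Ioo x 1] x).NeBot := by
      apply IsGLB.nhdsWithin_neBot
      · exact isGLB_Ioo h1
      · exact nonempty_Ioo.2 h1
    have hsub : Ioo x 1 ⊆ Icc (0:ℝ) 1 \ {x} := by
      intro y hy
      exact ⟨⟨le_trans hx.1 hy.1.le, hy.2.le⟩, fun h => absurd (h ▸ hy.1) (lt_irrefl _)⟩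
    have := habs.mono_left (nhdsWithin_mono x hsub)
    exact le_of_tendsto this (eventually_nhdsWithin_of_forall fun y hy => hbound y (hsub hy))
  · have h0 : (0:ℝ) < x := by rw [h1]; norm_num
    have hne : (𝓝[Ioo (0:ℝ) x] x).NeBot := by
      apply IsLUB.nhdsWithin_neBot
      · exact isLUB_Ioo h0
      · exact nonempty_Ioo.2 h0
    have hsub : Ioo (0:ℝ) x ⊆ Icc (0:ℝ) 1 \ {x} := by
      intro y hy
      exact ⟨⟨hy.1.le, le_trans hy.2.le hx.2⟩, fun h => absurd (h ▸ hy.2) (lt_irrefl _)⟩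
    have := habs.mono_left (nhdsWithin_mono x hsub)
    exact le_of_tendsto this (eventually_nhdsWithin_of_forall fun y hy => hbound y (hsub hy))

lemma wordDeriv_abs_le (w : List Λ) {z : ℝ} (hz : z ∈ Icc (0:ℝ) 1) :
    |wordDeriv F.f F.f' w z| ≤ F.ratio ^ w.length := by
  induction w with
  | nil => simp [wordDeriv]
  | cons i w ih =>
    simp only [wordDeriv, abs_mul, List.length_cons, pow_succ]
    rw [mul_comm (F.ratio ^ w.length) F.ratio]
    exact mul_le_mul (F.deriv_abs_le i (F.compWord_mem w hz)) ih (abs_nonneg _) F.ratio_pos.le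

lemma wordDeriv_abs_pos (w : List Λ) {z : ℝ} (hz : z ∈ Icc (0:ℝ) 1) :
    0 < |wordDeriv F.f F.f' w z| := by
  induction w with
  | nil => simp [wordDeriv]
  | cons i w ih =>
    simp only [wordDeriv, abs_mul]
    exact mul_pos (abs_pos.2 (F.nonvanishing i _ (F.compWord_mem w hz))) ih

lemma bddAbove_wordDeriv (w : List Λ) :
    BddAbove ((fun x => |wordDeriv F.f F.f' w x|) '' Icc (0:ℝ) 1) := by
  refine ⟨F.ratio ^ w.length, ?_⟩
  rintro t ⟨z, hz, rfl⟩
  exact F.wordDeriv_abs_le w hz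

lemma abs_le_wordDerivNorm (w : List Λ) {z : ℝ} (hz : z ∈ Icc (0:ℝ) 1) :
    |wordDeriv F.f F.f' w z| ≤ wordDerivNorm F.f F.f' w :=
  le_csSup (F.bddAbove_wordDeriv w) ⟨z, hz, rfl⟩

lemma wordDerivNorm_pos (w : List Λ) : 0 < wordDerivNorm F.f F.f' w :=
  lt_of_lt_of_le (F.wordDeriv_abs_pos w (by norm_num : (0:ℝ) ∈ Icc (0:ℝ) 1))
    (F.abs_le_wordDerivNorm w (by norm_num))

lemma wordDerivNorm_le (w : List Λ) : wordDerivNorm F.f F.f' w ≤ F.ratio ^ w.length := by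
  apply csSup_le
  · exact ⟨_, ⟨0, by norm_num, rfl⟩⟩
  · rintro t ⟨z, hz, rfl⟩; exact F.wordDeriv_abs_le w hz

end ConformalIFS

namespace ConformalIFS
variable {Λ : Type*} (F : ConformalIFS Λ)

/-- A nonnegative Hölder constant for `f' i`. -/
def holderC (i : Λ) : ℝ := max (F.holder i).choose 0

lemma holderC_nonneg (i : Λ) : 0 ≤ F.holderC i := le_max_right _ _

lemma holderC_spec (i : Λ) : ∀ x ∈ Icc (0:ℝ) 1, ∀ y ∈ Icc (0:ℝ) 1,
    |F.f' i x - F.f' i y| ≤ F.holderC i * |x - y| ^ F.exponent := by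
  intro x hx y hy
  refine le_trans ((F.holder i).choose_spec x hx y hy) ?_
  have : (0:ℝ) ≤ |x - y| ^ F.exponent := Real.rpow_nonneg (abs_nonneg _) _
  exact mul_le_mul_of_nonneg_right (le_max_left _ _) this

/-- first-letter derivative evaluation bound -/
lemma fderiv_close (i : Λ) (w : List Λ) {x x' z : ℝ} (hx' : x' ∈ Icc (0:ℝ) 1)
    (hz : z ∈ Icc (0:ℝ) 1) (hxw : x = compWord F.f w x') :
    |F.f' i (compWord F.f w z) - F.f' i x| ≤
      F.holderC i * (F.ratio ^ w.length) ^ F.exponent := by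
  have hx : x ∈ Icc (0:ℝ) 1 := hxw ▸ F.compWord_mem w hx'
  have h1 : |compWord F.f w z - x| ≤ F.ratio ^ w.length := by
    rw [hxw]
    calc |compWord F.f w z - compWord F.f w x'| ≤ F.ratio ^ w.length * |z - x'| :=
          F.compWord_lip w hz hx'
      _ ≤ F.ratio ^ w.length * 1 := by
          apply mul_le_mul_of_nonneg_left _ (pow_nonneg F.ratio_pos.le _)
          rw [abs_le]
          constructor <;> nlinarith [hz.1, hz.2, hx'.1, hx'.2]
      _ = F.ratio ^ w.length := mul_one _
  refine le_trans (F.holderC_spec i _ (F.compWord_mem w hz) x hx) ?_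
  apply mul_le_mul_of_nonneg_left _ (F.holderC_nonneg i)
  exact Real.rpow_le_rpow (abs_nonneg _) h1 F.exponent_pos.le

lemma wordDerivNorm_cons_le (i : Λ) (w : List Λ) {c δ : ℝ}
    (hub : ∀ z ∈ Icc (0:ℝ) 1, |F.f' i (compWord F.f w z)| ≤ c + δ) :
    wordDerivNorm F.f F.f' (i :: w) ≤ (c + δ) * wordDerivNorm F.f F.f' w := by
  apply csSup_le ((Set.nonempty_Icc.2 (by norm_num)).image _)
  rintro t ⟨z, hz, rfl⟩
  have h0 : (0:ℝ) ≤ c + δ := le_trans (abs_nonneg _) (hub 0 (by norm_num))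
  calc |wordDeriv F.f F.f' (i :: w) z| = |F.f' i (compWord F.f w z)| * |wordDeriv F.f F.f' w z| := by
        simp [wordDeriv, abs_mul]
    _ ≤ (c + δ) * wordDerivNorm F.f F.f' w :=
        mul_le_mul (hub z hz) (F.abs_le_wordDerivNorm w hz) (abs_nonneg _) h0

lemma le_wordDerivNorm_cons (i : Λ) (w : List Λ) {c δ : ℝ} (hcd : 0 ≤ c - δ)
    (hlb : ∀ z ∈ Icc (0:ℝ) 1, c - δ ≤ |F.f' i (compWord F.f w z)|) :
    (c - δ) * wordDerivNorm F.f F.f' w ≤ wordDerivNorm F.f F.f' (i :: w) := by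
  rcases eq_or_lt_of_le hcd with h | h
  · rw [← h]; simpa using (F.wordDerivNorm_pos (i :: w)).le
  · rw [mul_comm, ← le_div_iff₀ h]
    apply csSup_le ((Set.nonempty_Icc.2 (by norm_num)).image _)
    rintro t ⟨z, hz, rfl⟩
    rw [le_div_iff₀ h, mul_comm]
    calc (c - δ) * |wordDeriv F.f F.f' w z|
        ≤ |F.f' i (compWord F.f w z)| * |wordDeriv F.f F.f' w z| :=
          mul_le_mul_of_nonneg_right (hlb z hz) (abs_nonneg _)
      _ = |wordDeriv F.f F.f' (i :: w) z| := by simp [wordDeriv, abs_mul]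
      _ ≤ wordDerivNorm F.f F.f' (i :: w) := F.abs_le_wordDerivNorm (i :: w) hz

end ConformalIFS

theorem carpet_code {Λ₁ Λ₂ : Type*} {F : ConformalIFS Λ₁} {G : ConformalIFS Λ₂}
    {A : Set (Λ₁ × Λ₂)} {X : Set (ℝ × ℝ)} (hX : IsCarpetAttractor F G A X) (n : ℕ) :
    ∀ p ∈ X, ∃ w ∈ blockAlphabet A n, ∃ p' ∈ X,
      p.1 = compWord F.f (List.ofFn w.1) p'.1 ∧ p.2 = compWord G.f (List.ofFn w.2) p'.2 := by
  induction n with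
  | zero =>
    intro p hp
    exact ⟨(fun i => i.elim0, fun i => i.elim0), fun k => k.elim0, p, hp, by simp [compWord],
      by simp [compWord]⟩
  | succ n ih =>
    intro p hp
    rw [hX.2.2.2] at hp
    simp only [mem_iUnion, mem_image] at hp
    obtain ⟨ij, hij, q, hq, hpq⟩ := hp
    obtain ⟨w, hw, q', hq', h1, h2⟩ := ih q hq
    refine ⟨(Fin.cons ij.1 w.1, Fin.cons ij.2 w.2), ?_, q', hq', ?_, ?_⟩
    · intro k
      refine Fin.cases ?_ ?_ k
      · simpa using hij
      · intro k'; simpa using hw k'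
    · have : List.ofFn (Fin.cons ij.1 w.1 : Fin (n+1) → Λ₁) = ij.1 :: List.ofFn w.1 := by
        rw [List.ofFn_succ]; simp
      rw [this]
      simp only [compWord, Function.comp_apply]
      rw [← h1, ← hpq]
      rfl
    · have : List.ofFn (Fin.cons ij.2 w.2 : Fin (n+1) → Λ₂) = ij.2 :: List.ofFn w.2 := by
        rw [List.ofFn_succ]; simp
      rw [this]
      simp only [compWord, Function.comp_apply]
      rw [← h2, ← hpq]
      rfl

theorem holderC_err_tendsto {Λ' : Type*} (H : ConformalIFS Λ') (k : Λ') : Filter.Tendsto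
    (fun n : ℕ => H.holderC k * (H.ratio ^ n) ^ H.exponent) Filter.atTop (𝓝 0) := by
  have h1 : ∀ n : ℕ, (H.ratio ^ n) ^ H.exponent = (H.ratio ^ H.exponent) ^ n := by
    intro n
    rw [← Real.rpow_natCast H.ratio n, ← Real.rpow_natCast (H.ratio ^ H.exponent) n,
      ← Real.rpow_mul H.ratio_pos.le, ← Real.rpow_mul H.ratio_pos.le, mul_comm]
  have h2 : Filter.Tendsto (fun n : ℕ => (H.ratio ^ H.exponent) ^ n) Filter.atTop (𝓝 0) :=
    tendsto_pow_atTop_nhds_zero_of_lt_one (Real.rpow_nonneg H.ratio_pos.le _)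
      (Real.rpow_lt_one H.ratio_pos.le H.ratio_lt_one H.exponent_pos)
  have h3 := h2.const_mul (H.holderC k)
  rw [mul_zero] at h3
  simpa only [h1] using h3

theorem eventually_norms_ne {Λ₁ Λ₂ : Type*} {F : ConformalIFS Λ₁} {G : ConformalIFS Λ₂}
    {A : Set (Λ₁ × Λ₂)} {X : Set (ℝ × ℝ)} (hX : IsCarpetAttractor F G A X)
    {x y : ℝ} (hxy : (x, y) ∈ X) {i : Λ₁} {j : Λ₂} (hij : (i, j) ∈ A)
    (hne : |F.f' i x| ≠ |G.f' j y|) (N₀ : ℕ) :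
    ∃ n, N₀ ≤ n ∧ ∃ w ∈ blockAlphabet A n,
      wordDerivNorm F.f F.f' (List.ofFn w.1) ≠ wordDerivNorm G.f G.f' (List.ofFn w.2) := by
  by_contra hcon
  push_neg at hcon
  -- hcon : ∀ n, N₀ ≤ n → ∀ w ∈ blockAlphabet A n, norms equal
  have hxI : x ∈ Icc (0:ℝ) 1 := (hX.2.2.1 hxy).1
  have hyI : y ∈ Icc (0:ℝ) 1 := (hX.2.2.1 hxy).2
  set cf := |F.f' i x| with hcf
  set cg := |G.f' j y| with hcg
  have hcf0 : 0 < cf := abs_pos.2 (F.nonvanishing i x hxI)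
  have hcg0 : 0 < cg := abs_pos.2 (G.nonvanishing j y hyI)
  -- the error sequences tend to 0
  have keyF := holderC_err_tendsto F i
  have keyG := holderC_err_tendsto G j
  have hgap : 0 < |cf - cg| := abs_pos.2 (sub_ne_zero.2 hne)
  have hev : ∀ᶠ n : ℕ in atTop,
      F.holderC i * (F.ratio ^ n) ^ F.exponent + G.holderC j * (G.ratio ^ n) ^ G.exponent
        < |cf - cg| ∧ F.holderC i * (F.ratio ^ n) ^ F.exponent ≤ cf ∧
        G.holderC j * (G.ratio ^ n) ^ G.exponent ≤ cg ∧ N₀ ≤ n := by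
    have hsum := keyF.add keyG
    rw [add_zero] at hsum
    filter_upwards [hsum.eventually (eventually_lt_nhds hgap),
      keyF.eventually (eventually_le_nhds hcf0), keyG.eventually (eventually_le_nhds hcg0),
      eventually_ge_atTop N₀] with n h1 h2 h3 h4
    exact ⟨h1, h2, h3, h4⟩
  obtain ⟨n, hsmall, hdf, hdg, hN⟩ := hev.exists
  set δf := F.holderC i * (F.ratio ^ n) ^ F.exponent with hδf
  set δg := G.holderC j * (G.ratio ^ n) ^ G.exponent with hδg
  obtain ⟨w, hw, p', hp', h1, h2⟩ := carpet_code hX n (x, y) hxy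
  set l₁ := List.ofFn w.1 with hl₁
  set l₂ := List.ofFn w.2 with hl₂
  have hlen₁ : l₁.length = n := by simp [hl₁]
  have hlen₂ : l₂.length = n := by simp [hl₂]
  have hp'1 : p'.1 ∈ Icc (0:ℝ) 1 := (hX.2.2.1 hp').1
  have hp'2 : p'.2 ∈ Icc (0:ℝ) 1 := (hX.2.2.1 hp').2
  -- pointwise bounds on |f' i ∘ compWord l₁|
  have hubF : ∀ z ∈ Icc (0:ℝ) 1, |F.f' i (compWord F.f l₁ z)| ≤ cf + δf := by
    intro z hz
    have := F.fderiv_close i l₁ hp'1 hz h1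
    rw [hlen₁] at this
    have habs : |F.f' i (compWord F.f l₁ z)| - cf ≤ δf := by
      refine le_trans ?_ this
      exact le_trans (abs_sub_abs_le_abs_sub _ _) (le_refl _)
    linarith
  have hlbF : ∀ z ∈ Icc (0:ℝ) 1, cf - δf ≤ |F.f' i (compWord F.f l₁ z)| := by
    intro z hz
    have := F.fderiv_close i l₁ hp'1 hz h1
    rw [hlen₁] at this
    have habs : cf - |F.f' i (compWord F.f l₁ z)| ≤ δf := by
      refine le_trans ?_ this
      rw [abs_sub_comm]
      exact abs_sub_abs_le_abs_sub _ _
    linarith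
  have hubG : ∀ z ∈ Icc (0:ℝ) 1, |G.f' j (compWord G.f l₂ z)| ≤ cg + δg := by
    intro z hz
    have := G.fderiv_close j l₂ hp'2 hz h2
    rw [hlen₂] at this
    have habs : |G.f' j (compWord G.f l₂ z)| - cg ≤ δg :=
      le_trans (abs_sub_abs_le_abs_sub _ _) this
    linarith
  have hlbG : ∀ z ∈ Icc (0:ℝ) 1, cg - δg ≤ |G.f' j (compWord G.f l₂ z)| := by
    intro z hz
    have := G.fderiv_close j l₂ hp'2 hz h2
    rw [hlen₂] at this
    have habs : cg - |G.f' j (compWord G.f l₂ z)| ≤ δg := by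
      refine le_trans ?_ this
      rw [abs_sub_comm]
      exact abs_sub_abs_le_abs_sub _ _
    linarith
  -- equal norms at levels n and n+1
  have hAf : wordDerivNorm F.f F.f' l₁ = wordDerivNorm G.f G.f' l₂ := hcon n hN w hw
  have hw' : (Fin.cons i w.1, Fin.cons j w.2) ∈ blockAlphabet A (n+1) := by
    intro k
    refine Fin.cases ?_ ?_ k
    · simpa using hij
    · intro k'; simpa using hw k'
  have hA1 := hcon (n+1) (le_trans hN (Nat.le_succ n)) _ hw'
  have hofn1 : List.ofFn (Fin.cons i w.1 : Fin (n+1) → Λ₁) = i :: l₁ := by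
    rw [List.ofFn_succ]; simp [hl₁]
  have hofn2 : List.ofFn (Fin.cons j w.2 : Fin (n+1) → Λ₂) = j :: l₂ := by
    rw [List.ofFn_succ]; simp [hl₂]
  rw [hofn1, hofn2] at hA1
  -- chain of inequalities
  have hAfpos := F.wordDerivNorm_pos l₁
  have e1 : (cf - δf) * wordDerivNorm F.f F.f' l₁ ≤ wordDerivNorm F.f F.f' (i :: l₁) :=
    F.le_wordDerivNorm_cons i l₁ (by linarith) hlbF
  have e2 : wordDerivNorm F.f F.f' (i :: l₁) ≤ (cf + δf) * wordDerivNorm F.f F.f' l₁ :=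
    F.wordDerivNorm_cons_le i l₁ hubF
  have e3 : (cg - δg) * wordDerivNorm G.f G.f' l₂ ≤ wordDerivNorm G.f G.f' (j :: l₂) :=
    G.le_wordDerivNorm_cons j l₂ (by linarith) hlbG
  have e4 : wordDerivNorm G.f G.f' (j :: l₂) ≤ (cg + δg) * wordDerivNorm G.f G.f' l₂ :=
    G.wordDerivNorm_cons_le j l₂ hubG
  rw [← hAf] at e3 e4
  rw [hA1] at e1 e2
  have f1 : cf - δf ≤ cg + δg := by
    have := le_trans e1 e4
    exact le_of_mul_le_mul_right (by linarith [this]) hAfpos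
  have f2 : cg - δg ≤ cf + δf := by
    have := le_trans e3 e2
    exact le_of_mul_le_mul_right (by linarith [this]) hAfpos
  have : |cf - cg| ≤ δf + δg := abs_sub_le_iff.2 ⟨by linarith, by linarith⟩
  linarith

section ProbVec

variable {Γ₁ Γ₂ : Type*} [Fintype Γ₁] [Fintype Γ₂]

lemma colsum_entropy_rewrite (p : Γ₁ × Γ₂ → ℝ) :
    ∑ ij : Γ₁ × Γ₂, p ij * Real.log (colSum p ij.1) =
      ∑ i : Γ₁, colSum p i * Real.log (colSum p i) := by
  rw [Fintype.sum_prod_type]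
  refine Finset.sum_congr rfl fun i _ => ?_
  show (∑ y : Γ₂, p (i, y) * Real.log (colSum p i)) = colSum p i * Real.log (colSum p i)
  simp only [colSum]
  rw [← Finset.sum_mul]

lemma rowsum_entropy_rewrite (p : Γ₁ × Γ₂ → ℝ) :
    ∑ ij : Γ₁ × Γ₂, p ij * Real.log (rowSum p ij.2) =
      ∑ j : Γ₂, rowSum p j * Real.log (rowSum p j) := by
  rw [Fintype.sum_prod_type_right]
  refine Finset.sum_congr rfl fun j _ => ?_
  show (∑ x : Γ₁, p (x, j) * Real.log (rowSum p j)) = rowSum p j * Real.log (rowSum p j)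
  simp only [rowSum]
  rw [← Finset.sum_mul]

lemma gOne_eq_gTwo_of_lyap_eq (p : Γ₁ × Γ₂ → ℝ) (a : Γ₁ → ℝ) (b : Γ₂ → ℝ)
    (h : lyap1 p a = lyap2 p b) : gOne p a b = gTwo p a b := by
  rw [gOne, gTwo, h]
  ring

lemma lyap1_le_of_prob {A : Set (Γ₁ × Γ₂)} {p : Γ₁ × Γ₂ → ℝ} (hp : IsProbVec A p)
    {a : Γ₁ → ℝ} {c : ℝ} (ha : ∀ i, Real.log (a i) ≤ c) : lyap1 p a ≤ c := by
  calc lyap1 p a ≤ ∑ ij : Γ₁ × Γ₂, p ij * c :=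
        Finset.sum_le_sum fun ij _ => mul_le_mul_of_nonneg_left (ha ij.1) (hp.1 ij)
    _ = c := by rw [← Finset.sum_mul, hp.2.2, one_mul]

lemma lyap2_le_of_prob {A : Set (Γ₁ × Γ₂)} {p : Γ₁ × Γ₂ → ℝ} (hp : IsProbVec A p)
    {b : Γ₂ → ℝ} {c : ℝ} (hb : ∀ j, Real.log (b j) ≤ c) : lyap2 p b ≤ c := by
  calc lyap2 p b ≤ ∑ ij : Γ₁ × Γ₂, p ij * c :=
        Finset.sum_le_sum fun ij _ => mul_le_mul_of_nonneg_left (hb ij.2) (hp.1 ij)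
    _ = c := by rw [← Finset.sum_mul, hp.2.2, one_mul]

theorem exists_good_vec {Γ₁ Γ₂ : Type*} [Fintype Γ₁] [Fintype Γ₂]
    (A : Set (Γ₁ × Γ₂)) (a : Γ₁ → ℝ) (b : Γ₂ → ℝ)
    (c : ℝ) (hc : c < 0) (hla : ∀ i, Real.log (a i) ≤ c) (hlb : ∀ j, Real.log (b j) ≤ c)
    (w : Γ₁ × Γ₂) (hw : w ∈ A) (hab : Real.log (a w.1) ≠ Real.log (b w.2))
    (ε : ℝ) (hε : 0 < ε) :
    ∃ p, IsProbVec A p ∧ lyap1 p a ≠ lyap2 p b ∧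
      sSup {t | ∃ q, IsProbVec A q ∧ gFun q a b = t} - ε ≤ gFun p a b := by
  classical
  set S := {t | ∃ q, IsProbVec A q ∧ gFun q a b = t} with hSdef
  set δ : Γ₁ × Γ₂ → ℝ := fun ij => if ij = w then 1 else 0 with hδdef
  have hδ : IsProbVec A δ := by
    refine ⟨fun ij => by by_cases h : ij = w <;> simp [hδdef, h], fun ij hij => ?_, by
      simp [hδdef]⟩
    have : ij ≠ w := fun h => hij (h ▸ hw)
    simp [hδdef, this]
  have hδ1 : lyap1 δ a = Real.log (a w.1) := by
    simp [lyap1, hδdef, ite_mul]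
  have hδ2 : lyap2 δ b = Real.log (b w.2) := by
    simp [lyap2, hδdef, ite_mul]
  have hδcol : ∀ ij : Γ₁ × Γ₂, δ ij * Real.log (colSum δ ij.1) = 0 := by
    intro ij
    by_cases h : ij = w
    · have hcs : colSum δ w.1 = 1 := by
        rw [colSum]
        have : ∀ j : Γ₂, δ (w.1, j) = if j = w.2 then 1 else 0 := by
          intro j; by_cases hj : j = w.2 <;> simp [hδdef, Prod.ext_iff, hj]
        simp [this]
      rw [h, hcs]
      simp
    · simp [hδdef, h]
  have hδrow : ∀ ij : Γ₁ × Γ₂, δ ij * Real.log (rowSum δ ij.2) = 0 := by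
    intro ij
    by_cases h : ij = w
    · have hcs : rowSum δ w.2 = 1 := by
        rw [rowSum]
        have : ∀ i : Γ₁, δ (i, w.2) = if i = w.1 then 1 else 0 := by
          intro i; by_cases hi : i = w.1 <;> simp [hδdef, Prod.ext_iff, hi]
        simp [this]
      rw [h, hcs]
      simp
    · simp [hδdef, h]
  have hδent : ∀ ij : Γ₁ × Γ₂, δ ij * Real.log (δ ij) = 0 := by
    intro ij; by_cases h : ij = w <;> simp [hδdef, h]
  have hδgf : gFun δ a b = 0 := by
    rw [gFun]
    split
    · rw [gOne, Finset.sum_eq_zero fun ij _ => hδcol ij, Finset.sum_eq_zero fun ij _ => hδent ij]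
      simp
    · rw [gTwo, Finset.sum_eq_zero fun ij _ => hδrow ij, Finset.sum_eq_zero fun ij _ => hδent ij]
      simp
  have hδne : lyap1 δ a ≠ lyap2 δ b := by rw [hδ1, hδ2]; exact hab
  have hSne : S.Nonempty := ⟨gFun δ a b, δ, hδ, rfl⟩
  by_cases hbdd : BddAbove S
  · have hlt : sSup S - ε / 2 < sSup S := by linarith
    obtain ⟨t, ⟨q, hq, hgq⟩, ht⟩ := exists_lt_of_lt_csSup hSne hlt
    by_cases hql : lyap1 q a = lyap2 q b
    · -- perturbation argument
      have hl1 : lyap1 q a ≠ 0 := by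
        have := lyap1_le_of_prob hq hla; linarith
      have hl2 : lyap2 q b ≠ 0 := by
        have := lyap2_le_of_prob hq hlb; linarith
      set h : ℝ → (Γ₁ × Γ₂ → ℝ) := fun θ ij => (1 - θ) * q ij + θ * δ ij with hhdef
      have hh0 : h 0 = q := by funext ij; simp [hhdef]
      have hcont_eval : ∀ ij, Continuous fun θ => h θ ij := fun ij =>
        ((continuous_const.sub continuous_id).mul continuous_const).add
          (continuous_id.mul continuous_const)
      have hcol : ∀ i, Continuous fun θ => colSum (h θ) i := fun i =>
        continuous_finset_sum _ fun j _ => hcont_eval (i, j)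
      have hrow : ∀ j, Continuous fun θ => rowSum (h θ) j := fun j =>
        continuous_finset_sum _ fun i _ => hcont_eval (i, j)
      have hE : Continuous fun θ => ∑ ij : Γ₁ × Γ₂, h θ ij * Real.log (h θ ij) :=
        continuous_finset_sum _ fun ij _ => Real.continuous_mul_log.comp (hcont_eval ij)
      have hEc : Continuous fun θ => ∑ ij : Γ₁ × Γ₂, h θ ij * Real.log (colSum (h θ) ij.1) := by
        have hrw : (fun θ => ∑ ij : Γ₁ × Γ₂, h θ ij * Real.log (colSum (h θ) ij.1)) =
            fun θ => ∑ i : Γ₁, colSum (h θ) i * Real.log (colSum (h θ) i) :=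
          funext fun θ => colsum_entropy_rewrite (h θ)
        rw [hrw]
        exact continuous_finset_sum _ fun i _ => Real.continuous_mul_log.comp (hcol i)
      have hEr : Continuous fun θ => ∑ ij : Γ₁ × Γ₂, h θ ij * Real.log (rowSum (h θ) ij.2) := by
        have hrw : (fun θ => ∑ ij : Γ₁ × Γ₂, h θ ij * Real.log (rowSum (h θ) ij.2)) =
            fun θ => ∑ j : Γ₂, rowSum (h θ) j * Real.log (rowSum (h θ) j) :=
          funext fun θ => rowsum_entropy_rewrite (h θ)
        rw [hrw]
        exact continuous_finset_sum _ fun j _ => Real.continuous_mul_log.comp (hrow j)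
      have hlc1 : Continuous fun θ => lyap1 (h θ) a :=
        continuous_finset_sum _ fun ij _ => (hcont_eval ij).mul continuous_const
      have hlc2 : Continuous fun θ => lyap2 (h θ) b :=
        continuous_finset_sum _ fun ij _ => (hcont_eval ij).mul continuous_const
      have hT1 : Tendsto (fun θ => gOne (h θ) a b) (𝓝 0) (𝓝 (gOne q a b)) := by
        have c1 : ContinuousAt (fun θ => gOne (h θ) a b) 0 := by
          apply ContinuousAt.add
          · exact ContinuousAt.div hEc.continuousAt hlc1.continuousAt
              (by simp only [hh0]; exact hl1)
          · exact ContinuousAt.div (hE.sub hEc).continuousAt hlc2.continuousAt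
              (by simp only [hh0]; exact hl2)
        have := c1.tendsto
        rwa [show gOne (h 0) a b = gOne q a b from by rw [hh0]] at this
      have hT2 : Tendsto (fun θ => gTwo (h θ) a b) (𝓝 0) (𝓝 (gTwo q a b)) := by
        have c1 : ContinuousAt (fun θ => gTwo (h θ) a b) 0 := by
          apply ContinuousAt.add
          · exact ContinuousAt.div hEr.continuousAt hlc2.continuousAt
              (by simp only [hh0]; exact hl2)
          · exact ContinuousAt.div (hE.sub hEr).continuousAt hlc1.continuousAt
              (by simp only [hh0]; exact hl1)
        have := c1.tendsto
        rwa [show gTwo (h 0) a b = gTwo q a b from by rw [hh0]] at this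
      have hg12 : gOne q a b = gTwo q a b := gOne_eq_gTwo_of_lyap_eq q a b hql
      have hgfq : gFun q a b = gOne q a b := by rw [gFun, if_pos (le_of_eq hql.symm)]
      rw [← hgfq] at hT1
      rw [← hg12, ← hgfq] at hT2
      have hev1 : ∀ᶠ θ in 𝓝 (0:ℝ), |gOne (h θ) a b - gFun q a b| < ε / 2 := by
        have := Metric.tendsto_nhds.mp hT1 (ε / 2) (by linarith)
        filter_upwards [this] with θ hθ
        rwa [Real.dist_eq] at hθ
      have hev2 : ∀ᶠ θ in 𝓝 (0:ℝ), |gTwo (h θ) a b - gFun q a b| < ε / 2 := by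
        have := Metric.tendsto_nhds.mp hT2 (ε / 2) (by linarith)
        filter_upwards [this] with θ hθ
        rwa [Real.dist_eq] at hθ
      have hIoo : Ioo (0:ℝ) 1 ∈ 𝓝[>] (0:ℝ) :=
        Ioo_mem_nhdsGT_of_mem ⟨le_refl 0, by norm_num⟩
      have hevall : ∀ᶠ θ in 𝓝[>] (0:ℝ),
          (|gOne (h θ) a b - gFun q a b| < ε / 2 ∧ |gTwo (h θ) a b - gFun q a b| < ε / 2)
            ∧ θ ∈ Ioo (0:ℝ) 1 := by
        refine Filter.Eventually.and ?_ hIoo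
        exact nhdsWithin_le_nhds (hev1.and hev2)
      obtain ⟨θ, ⟨hθ1, hθ2⟩, hθI⟩ := hevall.exists
      have hθ0 : 0 < θ := hθI.1
      have hθle : θ < 1 := hθI.2
      have hprob : IsProbVec A (h θ) := by
        refine ⟨fun ij => add_nonneg (mul_nonneg (by linarith) (hq.1 ij))
          (mul_nonneg hθ0.le (hδ.1 ij)), fun ij hij => ?_, ?_⟩
        · rw [hhdef]; simp only; rw [hq.2.1 ij hij, hδ.2.1 ij hij]; ring
        · rw [hhdef]; simp only
          rw [Finset.sum_add_distrib, ← Finset.mul_sum, ← Finset.mul_sum, hq.2.2, hδ.2.2]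
          ring
      have hlin1 : lyap1 (h θ) a = (1 - θ) * lyap1 q a + θ * lyap1 δ a := by
        rw [lyap1, lyap1, lyap1, hhdef]
        simp only [add_mul, mul_assoc]
        rw [Finset.sum_add_distrib, ← Finset.mul_sum, ← Finset.mul_sum]
      have hlin2 : lyap2 (h θ) b = (1 - θ) * lyap2 q b + θ * lyap2 δ b := by
        rw [lyap2, lyap2, lyap2, hhdef]
        simp only [add_mul, mul_assoc]
        rw [Finset.sum_add_distrib, ← Finset.mul_sum, ← Finset.mul_sum]
      have hlne : lyap1 (h θ) a ≠ lyap2 (h θ) b := by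
        rw [hlin1, hlin2, hδ1, hδ2, hql]
        intro heq
        apply hab
        have : θ * Real.log (a w.1) = θ * Real.log (b w.2) := by linarith
        exact mul_left_cancel₀ (ne_of_gt hθ0) this
      refine ⟨h θ, hprob, hlne, ?_⟩
      have hcases : gFun (h θ) a b = gOne (h θ) a b ∨ gFun (h θ) a b = gTwo (h θ) a b := by
        unfold gFun
        split
        · exact Or.inl rfl
        · exact Or.inr rfl
      have hbound : gFun q a b - ε / 2 ≤ gFun (h θ) a b := by
        rcases hcases with hcc | hcc <;> rw [hcc]
        · have := abs_lt.mp hθ1; linarith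
        · have := abs_lt.mp hθ2; linarith
      rw [hgq] at hbound
      linarith
    · exact ⟨q, hq, hql, by rw [hgq]; linarith⟩
  · have h0 : sSup S = 0 := Real.sSup_of_not_bddAbove hbdd
    exact ⟨δ, hδ, hδne, by rw [h0, hδgf]; linarith⟩

end ProbVec

/-- If some coordinate derivatives differ in modulus at a point of the carpet,
then for every `ε > 0` there are infinitely many `n` admitting a probability vector on `Λⁿ` with
distinct Lyapunov exponents and `g`-value within `ε` of the maximum `t_n`. -/
theorem stmt9 {Λ₁ Λ₂ : Type} [Fintype Λ₁] [Fintype Λ₂] [Nonempty Λ₁] [Nonempty Λ₂]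
    (F : ConformalIFS Λ₁) (G : ConformalIFS Λ₂)
    (A : Set (Λ₁ × Λ₂)) (hA : A.Nonempty)
    (X : Set (ℝ × ℝ)) (hX : IsCarpetAttractor F G A X)
    (hpt : ∃ x y : ℝ, (x, y) ∈ X ∧ ∃ ij ∈ A, |F.f' ij.1 x| ≠ |G.f' ij.2 y|) :
    ∀ ε : ℝ, 0 < ε →
      {n : ℕ | ∃ p, IsProbVec (blockAlphabet A n) p ∧
        lyap1 p (fun i : Fin n → Λ₁ => wordDerivNorm F.f F.f' (List.ofFn i)) ≠
          lyap2 p (fun j : Fin n → Λ₂ => wordDerivNorm G.f G.f' (List.ofFn j)) ∧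
        sSup {t | ∃ q, IsProbVec (blockAlphabet A n) q ∧
            gFun q (fun i : Fin n → Λ₁ => wordDerivNorm F.f F.f' (List.ofFn i))
              (fun j : Fin n → Λ₂ => wordDerivNorm G.f G.f' (List.ofFn j)) = t} - ε ≤
          gFun p (fun i : Fin n → Λ₁ => wordDerivNorm F.f F.f' (List.ofFn i))
            (fun j : Fin n → Λ₂ => wordDerivNorm G.f G.f' (List.ofFn j))}.Infinite := by
  intro ε hε
  obtain ⟨x, y, hxy, ij, hij, hne⟩ := hpt
  apply Set.infinite_of_forall_exists_gt
  intro m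
  obtain ⟨n, hnm, w, hw, hwne⟩ := eventually_norms_ne hX hxy hij hne (m + 1)
  have hn1 : 1 ≤ n := le_trans (Nat.le_add_left 1 m) hnm
  set a : (Fin n → Λ₁) → ℝ := fun i => wordDerivNorm F.f F.f' (List.ofFn i) with ha
  set b : (Fin n → Λ₂) → ℝ := fun j => wordDerivNorm G.f G.f' (List.ofFn j) with hb
  have hapos : ∀ i, 0 < a i := fun i => F.wordDerivNorm_pos _
  have hbpos : ∀ j, 0 < b j := fun j => G.wordDerivNorm_pos _
  set c : ℝ := max ((n : ℝ) * Real.log F.ratio) ((n : ℝ) * Real.log G.ratio) with hc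
  have hnpos : (0:ℝ) < (n:ℝ) := by exact_mod_cast hn1
  have hcneg : c < 0 := by
    apply max_lt
    · exact mul_neg_of_pos_of_neg hnpos (Real.log_neg F.ratio_pos F.ratio_lt_one)
    · exact mul_neg_of_pos_of_neg hnpos (Real.log_neg G.ratio_pos G.ratio_lt_one)
  have hla : ∀ i, Real.log (a i) ≤ c := by
    intro i
    have h1 : a i ≤ F.ratio ^ n := by
      have := F.wordDerivNorm_le (List.ofFn i)
      simpa [ha] using this
    calc Real.log (a i) ≤ Real.log (F.ratio ^ n) := Real.log_le_log (hapos i) h1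
      _ = (n:ℝ) * Real.log F.ratio := Real.log_pow F.ratio n
      _ ≤ c := le_max_left _ _
  have hlb : ∀ j, Real.log (b j) ≤ c := by
    intro j
    have h1 : b j ≤ G.ratio ^ n := by
      have := G.wordDerivNorm_le (List.ofFn j)
      simpa [hb] using this
    calc Real.log (b j) ≤ Real.log (G.ratio ^ n) := Real.log_le_log (hbpos j) h1
      _ = (n:ℝ) * Real.log G.ratio := Real.log_pow G.ratio n
      _ ≤ c := le_max_right _ _
  have hab : Real.log (a w.1) ≠ Real.log (b w.2) := by
    intro heq
    apply hwne
    have := congrArg Real.exp heq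
    rwa [Real.exp_log (hapos w.1), Real.exp_log (hbpos w.2)] at this
  obtain ⟨p, hp, hpl, hps⟩ :=
    exists_good_vec (blockAlphabet A n) a b c hcneg hla hlb w hw hab ε hε
  exact ⟨n, ⟨p, hp, hpl, hps⟩, lt_of_lt_of_le (Nat.lt_succ_self m) hnm⟩


end
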